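/- arXiv:1607.05517 — 6 statements merged into one kernel-verified Lean document; each statement's English description precedes it below -/
import Mathlib

section
/- For any n ≥ 2, we have 1/a_n = 1 + ∑_{k=2}^{n} 1/(k - a_{k-1}). -/
/-!
Writing the recursion as `a n = a (n-1) (n - a (n-1)) / n` and splitting `n / (x (n - x))` into
partial fractions gives `1 / a n = 1 / a (n-1) + 1 / (n - a (n-1))`; the formula telescopes from
`a 1 = 1`. The bound `0 < a n ≤ 1` keeps every denominator nonzero.
-/

open Filter Topology Finset Real

theorem one_div_mul_one_sub_div {K : Type*} [Field K] {x c : K} (hx : x ≠ 0) (hc : c ≠ 0)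
    (hcx : c - x ≠ 0) : 1 / (x * (1 - x / c)) = 1 / x + 1 / (c - x) := by
  field_simp
  ring

theorem mul_one_sub_div_mem_Ioc {K : Type*} [Field K] [LinearOrder K] [IsStrictOrderedRing K]
    {x c : K} (hx : x ∈ Set.Ioc 0 1) (hc : 1 < c) : x * (1 - x / c) ∈ Set.Ioc 0 1 := by
  obtain ⟨hx0, hx1⟩ := hx
  have hc0 : 0 < c := zero_lt_one.trans hc
  have hxc : x / c < 1 := (div_lt_one hc0).2 (hx1.trans_lt hc)
  have hxc0 : 0 ≤ x / c := div_nonneg hx0.le hc0.le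
  exact ⟨mul_pos hx0 (sub_pos.2 hxc), by nlinarith⟩

theorem stmt3 (a : ℕ → ℝ) (ha1 : a 1 = 1)
    (harec : ∀ n, 2 ≤ n → a n = a (n - 1) * (1 - a (n - 1) / n)) :
    ∀ n, 2 ≤ n → 1 / a n = 1 + ∑ k ∈ Finset.Icc 2 n, 1 / ((k : ℝ) - a (k - 1)) := by
  have hbound : ∀ n, 1 ≤ n → a n ∈ Set.Ioc 0 1 := by
    intro n hn
    induction n, hn using Nat.le_induction with
    | base => simp [ha1]
    | succ n hn ih =>
      rw [harec (n + 1) (by omega), Nat.add_sub_cancel]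
      exact mul_one_sub_div_mem_Ioc ih (by norm_cast; omega)
  have hstep : ∀ n, 1 ≤ n →
      1 / a (n + 1) = 1 / a n + 1 / (((n + 1 : ℕ) : ℝ) - a n) := by
    intro n hn
    have han := hbound n hn
    have hlt : a n < ((n + 1 : ℕ) : ℝ) := han.2.trans_lt (by norm_cast; omega)
    rw [harec (n + 1) (by omega), Nat.add_sub_cancel]
    exact one_div_mul_one_sub_div han.1.ne' (by positivity) (sub_ne_zero.2 hlt.ne')
  suffices h : ∀ n, 1 ≤ n → 1 / a n = 1 + ∑ k ∈ Finset.Icc 2 n, 1 / ((k : ℝ) - a (k - 1)) from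
    fun n hn => h n (by omega)
  intro n hn
  induction n, hn using Nat.le_induction with
  | base => simp [ha1]
  | succ n hn ih =>
    rw [Finset.sum_Icc_succ_top (by omega), ← add_assoc, ← ih, Nat.add_sub_cancel]
    exact hstep n hn
end

section
/- The series ∑_{k=2}^{∞} a_{k-1}/(k(k - a_{k-1})) converges. -/
/-! Induction keeps `a n` in `(0, 1]`, and for such values the `k`-th term is at most
`1 / (k + 1) ^ 2`. -/

open Filter Topology Finset Real

lemma mul_one_sub_div_mem_Ioc_s4 {x m : ℝ} (hx : x ∈ Set.Ioc 0 1) (hm : 1 < m) :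
    x * (1 - x / m) ∈ Set.Ioc 0 1 := by
  obtain ⟨hx0, hx1⟩ := hx
  have hxm : x / m < 1 := (div_lt_one (by linarith)).mpr (by linarith)
  have hxm0 : 0 ≤ x / m := div_nonneg hx0.le (by linarith)
  exact ⟨mul_pos hx0 (by linarith), by nlinarith⟩

lemma mem_Ioc_of_rec (a : ℕ → ℝ) (ha1 : a 1 = 1)
    (harec : ∀ n, 2 ≤ n → a n = a (n - 1) * (1 - a (n - 1) / n)) :
    ∀ n, 1 ≤ n → a n ∈ Set.Ioc 0 1 := by
  intro n hn
  induction n, hn using Nat.le_induction with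
  | base => simp [ha1]
  | succ n hn ih =>
    rw [harec (n + 1) (by omega), Nat.add_sub_cancel]
    exact mul_one_sub_div_mem_Ioc_s4 ih (by norm_cast; omega)

lemma div_mul_sub_mem_Icc {x t : ℝ} (hx : x ∈ Set.Icc 0 1) (ht : 0 ≤ t) :
    x / ((t + 2) * (t + 2 - x)) ∈ Set.Icc 0 (1 / (t + 1) ^ 2) := by
  obtain ⟨hx0, hx1⟩ := hx
  have hsq : (t + 1) ^ 2 ≤ (t + 2) * (t + 2 - x) := by nlinarith
  exact ⟨div_nonneg hx0 (by nlinarith), div_le_div₀ zero_le_one hx1 (by positivity) hsq⟩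

theorem stmt4 (a : ℕ → ℝ) (ha1 : a 1 = 1)
    (harec : ∀ n, 2 ≤ n → a n = a (n - 1) * (1 - a (n - 1) / n)) :
    Summable (fun k : ℕ => a (k + 1) / ((k + 2 : ℝ) * ((k + 2 : ℝ) - a (k + 1)))) := by
  have hbound (k : ℕ) := div_mul_sub_mem_Icc
    (Set.Ioc_subset_Icc_self (mem_Ioc_of_rec a ha1 harec (k + 1) (by omega))) k.cast_nonneg
  have hsum : Summable (fun k : ℕ => 1 / ((k : ℝ) + 1) ^ 2) := by
    simpa using (summable_nat_add_iff 1).mpr (summable_one_div_nat_pow.mpr one_lt_two)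
  exact hsum.of_nonneg_of_le (fun k => (hbound k).1) (fun k => (hbound k).2)
end

section
/- The limit as n → ∞ of (1/a_n)/log n equals 1, i.e., 1/a_n is asymptotic to log n. -/
/-!
Writing `b n = 1 / a n`, the recursion becomes `b (n + 1) = b n + 1 / (n + 1 - a n)`, and since
`0 < a n ≤ 1` the increment lies between `1 / (n + 1)` and `1 / n`. Hence `b n` is squeezed between
the harmonic numbers `H n` and `1 + H (n - 1)`, so it differs from `log n` by a bounded amount.
-/

open Filter Topology Finset Real

open Asymptotics in
theorem tendsto_div_nhds_one_of_sub_isBigO_one {α : Type*} {l : Filter α} {u v : α → ℝ}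
    (hv : Tendsto v l atTop) (huv : (u - v) =O[l] (fun _ => (1 : ℝ))) :
    Tendsto (fun x => u x / v x) l (𝓝 1) :=
  (isEquivalent_iff_tendsto_one (hv.eventually_ne_atTop 0)).mp <|
    huv.trans_isLittleO <| isLittleO_const_left.2 <| .inr <| tendsto_abs_atTop_atTop.comp hv

theorem harmonic_le_harmonic_succ (n : ℕ) : (harmonic n : ℝ) ≤ harmonic (n + 1) := by
  rw [harmonic_succ]; push_cast; linarith [inv_pos.2 (n.cast_add_one_pos (α := ℝ))]

theorem harmonic_add_two (n : ℕ) :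
    (harmonic (n + 2) : ℝ) = harmonic (n + 1) + ((n + 2 : ℕ) : ℝ)⁻¹ := by
  rw [harmonic_succ (n + 1)]; push_cast; ring

section Sequence

variable {a : ℕ → ℝ} (ha1 : a 1 = 1)
  (harec : ∀ n, 2 ≤ n → a n = a (n - 1) * (1 - a (n - 1) / n))
include ha1 harec

theorem a_succ_mem_Ioc (n : ℕ) : a (n + 1) ∈ Set.Ioc 0 1 := by
  induction n with
  | zero => simp [ha1]
  | succ n ih =>
    obtain ⟨hpos, hle⟩ := ih
    have hfrac : a (n + 1) / (n + 2 : ℕ) ≤ 1 / 2 := by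
      rw [div_le_iff₀ (by positivity)]; push_cast; linarith [n.cast_nonneg (α := ℝ)]
    have hfrac_nonneg : 0 ≤ a (n + 1) / (n + 2 : ℕ) := by positivity
    rw [harec (n + 2) (by omega), show n + 2 - 1 = n + 1 by omega]
    constructor <;> nlinarith

theorem one_div_a_add_two (n : ℕ) :
    1 / a (n + 2) = 1 / a (n + 1) + 1 / ((n + 2 : ℕ) - a (n + 1)) := by
  obtain ⟨hpos, hle⟩ := a_succ_mem_Ioc ha1 harec n
  have hgap : 0 < ((n + 2 : ℕ) : ℝ) - a (n + 1) := by push_cast; linarith [n.cast_nonneg (α := ℝ)]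
  rw [harec (n + 2) (by omega), show n + 2 - 1 = n + 1 by omega]
  field_simp
  ring

theorem harmonic_le_one_div_a (n : ℕ) : (harmonic (n + 1) : ℝ) ≤ 1 / a (n + 1) := by
  induction n with
  | zero => simp [ha1]
  | succ n ih =>
    obtain ⟨hpos, hle⟩ := a_succ_mem_Ioc ha1 harec n
    have hstep : ((n + 2 : ℕ) : ℝ)⁻¹ ≤ 1 / ((n + 2 : ℕ) - a (n + 1)) := by
      rw [one_div]
      exact inv_anti₀ (by push_cast; linarith [n.cast_nonneg (α := ℝ)]) (by linarith)
    rw [one_div_a_add_two ha1 harec, harmonic_add_two]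
    linarith

theorem one_div_a_le_one_add_harmonic (n : ℕ) : 1 / a (n + 1) ≤ 1 + harmonic n := by
  induction n with
  | zero => simp [ha1]
  | succ n ih =>
    obtain ⟨-, hle⟩ := a_succ_mem_Ioc ha1 harec n
    have hstep : 1 / ((n + 2 : ℕ) - a (n + 1)) ≤ ((n + 1 : ℕ) : ℝ)⁻¹ := by
      rw [one_div]
      exact inv_anti₀ (by positivity) (by push_cast; linarith)
    rw [one_div_a_add_two ha1 harec, harmonic_succ]
    push_cast at ih hstep ⊢
    linarith

theorem abs_one_div_a_sub_log_le (n : ℕ) : |1 / a (n + 1) - log (n + 1 : ℕ)| ≤ 2 := by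
  have hmono := harmonic_le_harmonic_succ n
  have hlower := harmonic_le_one_div_a ha1 harec n
  have hupper := one_div_a_le_one_add_harmonic ha1 harec n
  have hlog_le := log_add_one_le_harmonic n
  have hle_log := harmonic_le_one_add_log (n + 1)
  rw [abs_le]
  constructor <;> linarith

end Sequence

theorem stmt8 (a : ℕ → ℝ) (ha1 : a 1 = 1)
    (harec : ∀ n, 2 ≤ n → a n = a (n - 1) * (1 - a (n - 1) / n)) :
    Filter.Tendsto (fun n : ℕ => (1 / a n) / Real.log n) Filter.atTop (𝓝 1) := by
  rw [← tendsto_add_atTop_iff_nat 1]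
  have hlog : Tendsto (fun n : ℕ => log (n + 1 : ℕ)) atTop atTop :=
    tendsto_log_atTop.comp <| tendsto_natCast_atTop_atTop.comp <| tendsto_add_atTop_nat 1
  refine tendsto_div_nhds_one_of_sub_isBigO_one hlog <| Asymptotics.IsBigO.of_bound 2 ?_
  filter_upwards with n
  simpa using abs_one_div_a_sub_log_le ha1 harec n
end

section
/- The partial sums c(n) = ∑_{k=1}^{n} a_k satisfy c(n)/π(n) → 1 as n → ∞, where π is the prime counting function. -/
open Filter Topology Finset Real

/-! Taking reciprocals, the recursion reads `1 / a (n + 1) = 1 / a n + 1 / (n + 1 - a n)`, and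
`0 < a n ≤ 1` squeezes the increment between `1 / (n + 1)` and `1 / n`. Hence
`H n ≤ 1 / a n ≤ H (n - 1) + 1` for the harmonic numbers `H`, so `1 / a n = log n + O(1)` and
`a n ~ 1 / log n`. Since `∑ 1 / log k` diverges, summing this equivalence gives
`c n ~ ∑_{k ≤ n} 1 / log k ~ π n`. -/

open Asymptotics

theorem Asymptotics.IsEquivalent.sum_range {f g : ℕ → ℝ} (h : f ~[atTop] g) (hg : 0 ≤ g)
    (hg_div : Tendsto (fun n ↦ ∑ i ∈ range n, g i) atTop atTop) :
    (fun n ↦ ∑ i ∈ range n, f i) ~[atTop] fun n ↦ ∑ i ∈ range n, g i := by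
  simpa only [IsEquivalent, Pi.sub_def, ← sum_sub_distrib] using h.isLittleO.sum_range hg hg_div

theorem Finset.sum_Icc_one_eq_sum_range {M : Type*} [AddCommMonoid M] (f : ℕ → M) (n : ℕ) :
    ∑ k ∈ Icc 1 n, f k = ∑ k ∈ range n, f (k + 1) := by
  induction n with
  | zero => simp
  | succ n ih => rw [sum_Icc_succ_top (by omega), ih, sum_range_succ]

theorem sum_Icc_two_one_div_log_eq_sum_range (n : ℕ) :
    ∑ k ∈ Icc 2 n, 1 / log k = ∑ k ∈ range n, (log ((k : ℝ) + 1))⁻¹ := by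
  rw [sum_subset (Icc_subset_Icc_left one_le_two) ?_, sum_Icc_one_eq_sum_range]
  · push_cast; simp only [one_div]
  · intro k hk hk2
    -- the extra term `k = 1` is `1 / log 1 = 0`
    obtain rfl : k = 1 := by simp only [mem_Icc] at hk hk2; omega
    simp

theorem tendsto_sum_range_inv_log_add_one_atTop :
    Tendsto (fun n ↦ ∑ k ∈ range n, (log ((k : ℝ) + 1))⁻¹) atTop atTop := by
  have harmonic_div : Tendsto (fun n ↦ ∑ k ∈ range n, (k : ℝ)⁻¹) atTop atTop :=
    (not_summable_iff_tendsto_nat_atTop_of_nonneg fun k ↦ by positivity).1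
      not_summable_natCast_inv
  refine tendsto_atTop_mono (fun n ↦ sum_le_sum fun k _ ↦ ?_) harmonic_div
  rcases Nat.eq_zero_or_pos k with rfl | hk
  · simp
  have hk' : (1 : ℝ) ≤ k := by exact_mod_cast hk
  have hlog_le : log ((k : ℝ) + 1) ≤ k := by
    linarith [log_le_sub_one_of_pos (x := (k : ℝ) + 1) (by linarith)]
  exact inv_anti₀ (log_pos (by linarith)) hlog_le

theorem inv_mul_one_sub_div {K : Type*} [Field K] {A M : K} (hA : A ≠ 0) (hM : M ≠ 0)
    (hMA : M - A ≠ 0) : (A * (1 - A / M))⁻¹ = A⁻¹ + (M - A)⁻¹ := by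
  field_simp
  ring

section

variable {a : ℕ → ℝ}

theorem harmonic_le_inv_le_harmonic_add_one (ha1 : a 1 = 1)
    (harec : ∀ n, 2 ≤ n → a n = a (n - 1) * (1 - a (n - 1) / n)) (n : ℕ) :
    0 < a (n + 1) ∧ a (n + 1) ≤ 1 ∧
      (harmonic (n + 1) : ℝ) ≤ (a (n + 1))⁻¹ ∧ (a (n + 1))⁻¹ ≤ harmonic n + 1 := by
  induction n with
  | zero => norm_num [ha1]
  | succ n ih =>
    obtain ⟨hpos, hle, hlow, hup⟩ := ih
    have hrec : a (n + 2) = a (n + 1) * (1 - a (n + 1) / ((n : ℝ) + 2)) := by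
      rw [harec (n + 2) (by omega)]; push_cast; ring_nf
    have hgap : (n : ℝ) + 1 ≤ (n : ℝ) + 2 - a (n + 1) := by linarith
    have hinv : (a (n + 2))⁻¹ = (a (n + 1))⁻¹ + ((n : ℝ) + 2 - a (n + 1))⁻¹ := by
      rw [hrec]; exact inv_mul_one_sub_div hpos.ne' (by positivity) (by linarith)
    have hharm : ∀ m : ℕ, (harmonic (m + 1) : ℝ) = harmonic m + ((m : ℝ) + 1)⁻¹ := fun m ↦ by
      rw [harmonic_succ]; push_cast; ring
    refine ⟨?_, ?_, ?_, ?_⟩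
    · exact inv_pos.1 (hinv ▸ add_pos (inv_pos.2 hpos) (inv_pos.2 (by linarith)))
    · rw [hrec]
      refine (mul_le_of_le_one_right hpos.le ?_).trans hle
      linarith [div_nonneg hpos.le (by positivity : (0 : ℝ) ≤ n + 2)]
    · rw [hinv, hharm, Nat.cast_add_one, add_assoc, one_add_one_eq_two]
      exact add_le_add hlow (inv_anti₀ (by linarith) (by linarith))
    · rw [hinv, hharm]
      have : ((n : ℝ) + 2 - a (n + 1))⁻¹ ≤ ((n : ℝ) + 1)⁻¹ := inv_anti₀ (by positivity) hgap
      linarith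

theorem log_le_inv_le_log_add_two (ha1 : a 1 = 1)
    (harec : ∀ n, 2 ≤ n → a n = a (n - 1) * (1 - a (n - 1) / n)) (n : ℕ) :
    log ((n : ℝ) + 1) ≤ (a (n + 1))⁻¹ ∧ (a (n + 1))⁻¹ ≤ log ((n : ℝ) + 1) + 2 := by
  obtain ⟨-, -, hlow, hup⟩ := harmonic_le_inv_le_harmonic_add_one ha1 harec n
  have hmono : (harmonic n : ℝ) ≤ harmonic (n + 1) := by
    rw [harmonic_succ]; push_cast; linarith [inv_pos.2 (n.cast_add_one_pos (α := ℝ))]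
  have hlog := log_add_one_le_harmonic n
  have hharm := harmonic_le_one_add_log (n + 1)
  push_cast at hlog hharm
  constructor <;> linarith

theorem isEquivalent_inv_log (ha1 : a 1 = 1)
    (harec : ∀ n, 2 ≤ n → a n = a (n - 1) * (1 - a (n - 1) / n)) :
    (fun n : ℕ ↦ a (n + 1)) ~[atTop] fun n ↦ (log ((n : ℝ) + 1))⁻¹ := by
  have hlog : Tendsto (fun n : ℕ ↦ log ((n : ℝ) + 1)) atTop atTop :=
    tendsto_log_atTop.comp (tendsto_atTop_add_const_right _ 1 tendsto_natCast_atTop_atTop)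
  have hbdd : (fun n : ℕ ↦ (a (n + 1))⁻¹ - log ((n : ℝ) + 1)) =O[atTop] fun _ ↦ (1 : ℝ) :=
    IsBigO.of_bound 2 <| Eventually.of_forall fun n ↦ by
      obtain ⟨hlow, hup⟩ := log_le_inv_le_log_add_two ha1 harec n
      rw [norm_one, mul_one, norm_of_nonneg (by linarith)]
      linarith
  have hinv : (fun n : ℕ ↦ (a (n + 1))⁻¹) ~[atTop] fun n ↦ log ((n : ℝ) + 1) :=
    hbdd.trans_isLittleO ((isLittleO_one_left_iff ℝ).2 (tendsto_norm_atTop_atTop.comp hlog))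
  simpa only [Pi.inv_def, inv_inv] using hinv.inv

end

theorem stmt11 (a : ℕ → ℝ) (ha1 : a 1 = 1)
    (harec : ∀ n, 2 ≤ n → a n = a (n - 1) * (1 - a (n - 1) / n))
    (hPNT : Filter.Tendsto (fun n : ℕ =>
      (Nat.primeCounting n : ℝ) / ∑ k ∈ Finset.Icc 2 n, 1 / Real.log k)
      Filter.atTop (𝓝 1)) :
    Filter.Tendsto (fun n : ℕ =>
      (∑ k ∈ Finset.Icc 1 n, a k) / (Nat.primeCounting n : ℝ))
      Filter.atTop (𝓝 1) := by
  have hsum : (fun n ↦ ∑ k ∈ Icc 1 n, a k) ~[atTop] fun n ↦ ∑ k ∈ Icc 2 n, 1 / log k := by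
    simpa only [sum_Icc_one_eq_sum_range, sum_Icc_two_one_div_log_eq_sum_range] using
      (isEquivalent_inv_log ha1 harec).sum_range
        (fun k ↦ inv_nonneg.2 (log_nonneg (by simp))) tendsto_sum_range_inv_log_add_one_atTop
  have hπ : ∀ᶠ n in atTop, (Nat.primeCounting n : ℝ) ≠ 0 :=
    (hPNT.eventually_ne one_ne_zero).mono fun n h ↦ by rintro h0; simp [h0] at h
  exact (isEquivalent_iff_tendsto_one hπ).1 (hsum.trans (isEquivalent_of_tendsto_one hPNT).symm)
end

section
/- Assuming Panaitopol's inequalities, the limit as n → ∞ of 1/a_n - n/π(n) equals γ + S + 1, where γ is the Euler–Mascheroni constant and S = ∑_{k=2}^{∞} a_{k-1}/(k(k - a_{k-1})). -/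
/-!
Panaitopol's inequalities squeeze `log n - n / π(n)` between `1 - 1/√(log n)` and
`1 + 1/√(log n)`, so it tends to `1`; adding this to `1/a n - log n → γ + S` gives the limit.
-/

open Filter Topology Finset Real

lemma sub_div_bounds_of_div_lt_of_lt_div {x p L e : ℝ} (hx : 0 < x) (he : 0 ≤ e)
    (hD : 0 < L - 1 - e) (hlow : x / (L - 1 + e) < p) (hupp : p < x / (L - 1 - e)) :
    1 - e < L - x / p ∧ L - x / p < 1 + e := by
  have hp : 0 < p := lt_trans (by apply div_pos hx; linarith) hlow
  have hxp : x / p < L - 1 + e := by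
    rw [div_lt_iff₀ hp]
    linarith [(div_lt_iff₀ (by linarith : 0 < L - 1 + e)).mp hlow]
  have hpx : L - 1 - e < x / p := by
    rw [lt_div_iff₀ hp]
    linarith [(lt_div_iff₀ hD).mp hupp]
  constructor <;> linarith

lemma tendsto_log_natCast_atTop : Tendsto (fun n : ℕ => log n) atTop atTop :=
  tendsto_log_atTop.comp tendsto_natCast_atTop_atTop

lemma tendsto_one_div_sqrt_log_natCast_atTop :
    Tendsto (fun n : ℕ => 1 / √(log n)) atTop (𝓝 0) := by
  simpa only [one_div, Function.comp_def, Pi.inv_def] using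
    (tendsto_sqrt_atTop.comp tendsto_log_natCast_atTop).inv_tendsto_atTop

lemma eventually_pos_log_sub_one_sub_one_div_sqrt_log :
    ∀ᶠ n : ℕ in atTop, 0 < log n - 1 - 1 / √(log n) := by
  have := tendsto_log_natCast_atTop.atTop_add ((tendsto_const_nhds (x := (-1 : ℝ))).sub
    tendsto_one_div_sqrt_log_natCast_atTop)
  filter_upwards [this.eventually_gt_atTop 0] with n hn
  linarith

lemma tendsto_log_sub_div_of_panaitopol_bounds (f : ℕ → ℝ)
    (hlow : ∀ᶠ n : ℕ in atTop, (n : ℝ) / (log n - 1 + 1 / √(log n)) < f n)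
    (hupp : ∀ᶠ n : ℕ in atTop, f n < (n : ℝ) / (log n - 1 - 1 / √(log n))) :
    Tendsto (fun n : ℕ => log n - n / f n) atTop (𝓝 1) := by
  have hbounds : ∀ᶠ n : ℕ in atTop,
      1 - 1 / √(log n) < log n - n / f n ∧ log n - n / f n < 1 + 1 / √(log n) := by
    filter_upwards [hlow, hupp, eventually_pos_log_sub_one_sub_one_div_sqrt_log,
      eventually_gt_atTop 0] with n hl hu hD hn
    exact sub_div_bounds_of_div_lt_of_lt_div (by exact_mod_cast hn) (by positivity) hD hl hu
  have h0 := tendsto_one_div_sqrt_log_natCast_atTop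
  refine tendsto_of_tendsto_of_tendsto_of_le_of_le' (g := fun n : ℕ => 1 - 1 / √(log n))
    (h := fun n : ℕ => 1 + 1 / √(log n)) ?_ ?_ ?_ ?_
  · simpa using (tendsto_const_nhds (x := (1 : ℝ))).sub h0
  · simpa using (tendsto_const_nhds (x := (1 : ℝ))).add h0
  · filter_upwards [hbounds] with n hn using hn.1.le
  · filter_upwards [hbounds] with n hn using hn.2.le

theorem stmt14_general (a : ℕ → ℝ)
    (hPan₁ : ∀ n : ℕ, 59 ≤ n →
      (n : ℝ) / (Real.log n - 1 + 1 / Real.sqrt (Real.log n)) < (Nat.primeCounting n : ℝ))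
    (hPan₂ : ∀ n : ℕ, 6 ≤ n →
      (Nat.primeCounting n : ℝ) < (n : ℝ) / (Real.log n - 1 - 1 / Real.sqrt (Real.log n)))
    (hb : Filter.Tendsto (fun n : ℕ => 1 / a n - Real.log n) Filter.atTop
      (𝓝 (Real.eulerMascheroniConstant +
        ∑' k : ℕ, a (k + 1) / ((k + 2 : ℝ) * ((k + 2 : ℝ) - a (k + 1)))))) :
    Filter.Tendsto (fun n : ℕ => 1 / a n - (n : ℝ) / (Nat.primeCounting n : ℝ))
      Filter.atTop (𝓝 (Real.eulerMascheroniConstant +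
        (∑' k : ℕ, a (k + 1) / ((k + 2 : ℝ) * ((k + 2 : ℝ) - a (k + 1)))) + 1)) := by
  have hπ := tendsto_log_sub_div_of_panaitopol_bounds (fun n => (Nat.primeCounting n : ℝ))
    (eventually_atTop.2 ⟨59, hPan₁⟩) (eventually_atTop.2 ⟨6, hPan₂⟩)
  convert hb.add hπ using 2 with n
  ring

theorem stmt14 (a : ℕ → ℝ) (ha1 : a 1 = 1)
    (harec : ∀ n, 2 ≤ n → a n = a (n - 1) * (1 - a (n - 1) / n))
    (hPan₁ : ∀ n : ℕ, 59 ≤ n →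
      (n : ℝ) / (Real.log n - 1 + 1 / Real.sqrt (Real.log n)) < (Nat.primeCounting n : ℝ))
    (hPan₂ : ∀ n : ℕ, 6 ≤ n →
      (Nat.primeCounting n : ℝ) < (n : ℝ) / (Real.log n - 1 - 1 / Real.sqrt (Real.log n)))
    (hb : Filter.Tendsto (fun n : ℕ => 1 / a n - Real.log n) Filter.atTop
      (𝓝 (Real.eulerMascheroniConstant +
        ∑' k : ℕ, a (k + 1) / ((k + 2 : ℝ) * ((k + 2 : ℝ) - a (k + 1)))))) :
    Filter.Tendsto (fun n : ℕ => 1 / a n - (n : ℝ) / (Nat.primeCounting n : ℝ))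
      Filter.atTop (𝓝 (Real.eulerMascheroniConstant +
        (∑' k : ℕ, a (k + 1) / ((k + 2 : ℝ) * ((k + 2 : ℝ) - a (k + 1)))) + 1)) :=
  stmt14_general a hPan₁ hPan₂ hb
end

section
/- The sequence (a_n) converges to 0 as n → ∞. -/
/-!
The step `x ↦ x (1 - x / c)` with `c = n` raises `1 / a` by at least `1 / n`, since
`1 / (x (1 - x / c)) - 1 / x = 1 / (c - x) ≥ 1 / c`. Hence `1 / a n` dominates the `n`-th
harmonic sum, which diverges.
-/

open Filter Topology Finset Real

lemma inv_add_inv_le_inv_mul_one_sub_div {x c : ℝ} (hx : 0 < x) (hxc : x < c) :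
    x⁻¹ + c⁻¹ ≤ (x * (1 - x / c))⁻¹ := by
  have hc : 0 < c := hx.trans hxc
  have hcx : 0 < c - x := by linarith
  have hgap : (x * (1 - x / c))⁻¹ - (x⁻¹ + c⁻¹) = x / (c * (c - x)) := by
    field_simp
    ring
  linarith [show 0 ≤ x / (c * (c - x)) by positivity]

section

variable {a : ℕ → ℝ} (ha1 : a 1 = 1)
  (hstep : ∀ n, 1 ≤ n → a (n + 1) = a n * (1 - a n / (n + 1)))
include ha1 hstep

lemma pos_and_le_one_of_step {n : ℕ} (hn : 1 ≤ n) : 0 < a n ∧ a n ≤ 1 := by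
  induction n, hn using Nat.le_induction with
  | base => simp [ha1]
  | succ m hm ih =>
    obtain ⟨hpos, hle⟩ := ih
    have hlt : a m / (m + 1) < 1 := by
      rw [div_lt_one (by positivity)]
      linarith [(Nat.one_le_cast (α := ℝ)).mpr hm]
    have hnonneg : 0 ≤ a m / (m + 1) := by positivity
    rw [hstep m hm]
    exact ⟨mul_pos hpos (by linarith), by nlinarith⟩

lemma sum_range_one_div_succ_le_inv_of_step {n : ℕ} (hn : 1 ≤ n) :
    ∑ i ∈ range n, (1 / (i + 1) : ℝ) ≤ (a n)⁻¹ := by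
  induction n, hn using Nat.le_induction with
  | base => simp [ha1]
  | succ m hm ih =>
    obtain ⟨hpos, hle⟩ := pos_and_le_one_of_step ha1 hstep hm
    have hlt : a m < m + 1 := by linarith [(Nat.one_le_cast (α := ℝ)).mpr hm]
    rw [sum_range_succ, hstep m hm, one_div]
    linarith [inv_add_inv_le_inv_mul_one_sub_div hpos hlt]

end

theorem stmt18 (a : ℕ → ℝ) (ha1 : a 1 = 1)
    (harec : ∀ n, 2 ≤ n → a n = a (n - 1) * (1 - a (n - 1) / n)) :
    Filter.Tendsto a Filter.atTop (𝓝 0) := by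
  have hstep : ∀ n, 1 ≤ n → a (n + 1) = a n * (1 - a n / (n + 1)) := fun n hn => by
    simpa using harec (n + 1) (by omega)
  have hinv : Tendsto (fun n => (∑ i ∈ range n, (1 / (i + 1) : ℝ))⁻¹) atTop (𝓝 0) :=
    tendsto_inv_atTop_zero.comp tendsto_sum_range_one_div_nat_succ_atTop
  refine tendsto_of_tendsto_of_tendsto_of_le_of_le' tendsto_const_nhds hinv ?_ ?_
  · filter_upwards [eventually_ge_atTop 1] with n hn
    exact (pos_and_le_one_of_step ha1 hstep hn).1.le
  · filter_upwards [eventually_ge_atTop 1] with n hn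
    have hsum : 0 < ∑ i ∈ range n, (1 / (i + 1) : ℝ) :=
      sum_pos (fun i _ => by positivity) (nonempty_range_iff.mpr (by omega))
    simpa using inv_anti₀ hsum (sum_range_one_div_succ_le_inv_of_step ha1 hstep hn)
end
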